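/- Let 𝓕 be a nonempty family of subsets of a nonempty finite set S. Then ∑_{(A,B)∈𝓕²} |A ⊗ B| = ∑_{(A,B)∈𝓕²} |A ⊕ B| holds if and only if every x ∈ S belongs to exactly half of the members of 𝓕, i.e. 2|𝓕_x| = |𝓕| for all x ∈ S. -/

import Mathlib

/-!
With the ±1 indicator `χ_A`, `|A ⊗ B| - |A ⊕ B| = ∑_{x ∈ S} χ_A(x) χ_B(x)`. Summing over pairs,
the difference of the two sides is `∑_{x ∈ S} (∑_{A ∈ 𝓕} χ_A(x))² = ∑_{x ∈ S} (2|𝓕_x| - |𝓕|)²`,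
a sum of squares, which vanishes iff every term does.
-/

open Finset
open scoped symmDiff

namespace Finset

variable {α : Type*} [DecidableEq α]

def signIndicator (A : Finset α) (x : α) : ℤ := if x ∈ A then 1 else -1

theorem signIndicator_mul_signIndicator (A B : Finset α) (x : α) :
    signIndicator A x * signIndicator B x = if x ∈ A ∆ B then -1 else 1 := by
  by_cases hA : x ∈ A <;> by_cases hB : x ∈ B <;> simp [signIndicator, mem_symmDiff, hA, hB]

theorem card_sdiff_sub_card_of_subset {S T : Finset α} (hT : T ⊆ S) :
    (#(S \ T) : ℤ) - #T = ∑ x ∈ S, if x ∈ T then -1 else 1 := by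
  rw [sum_ite, filter_mem_eq_inter, inter_eq_right.mpr hT, filter_notMem_eq_sdiff]
  simp only [sum_const, smul_neg]
  ring

theorem card_sdiff_symmDiff_sub_card_symmDiff {S A B : Finset α} (hA : A ⊆ S) (hB : B ⊆ S) :
    (#(S \ A ∆ B) : ℤ) - #(A ∆ B) = ∑ x ∈ S, signIndicator A x * signIndicator B x := by
  simp only [signIndicator_mul_signIndicator]
  exact card_sdiff_sub_card_of_subset (symmDiff_le_sup.trans (sup_le hA hB))

theorem sum_signIndicator (𝓕 : Finset (Finset α)) (x : α) :
    ∑ A ∈ 𝓕, signIndicator A x = 2 * #(𝓕.filter (fun A => x ∈ A)) - #𝓕 := by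
  rw [← card_filter_add_card_filter_not (fun A => x ∈ A) (s := 𝓕)]
  simp only [signIndicator, sum_ite, sum_const, smul_neg]
  push_cast
  ring

theorem sum_sum_card_sdiff_symmDiff_sub_card_symmDiff {S : Finset α} {𝓕 : Finset (Finset α)}
    (hsub : ∀ A ∈ 𝓕, A ⊆ S) :
    ∑ A ∈ 𝓕, ∑ B ∈ 𝓕, ((#(S \ A ∆ B) : ℤ) - #(A ∆ B)) =
      ∑ x ∈ S, (2 * #(𝓕.filter (fun A => x ∈ A)) - #𝓕 : ℤ) ^ 2 := by
  calc ∑ A ∈ 𝓕, ∑ B ∈ 𝓕, ((#(S \ A ∆ B) : ℤ) - #(A ∆ B))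
      = ∑ A ∈ 𝓕, ∑ B ∈ 𝓕, ∑ x ∈ S, signIndicator A x * signIndicator B x :=
        sum_congr rfl fun A hA => sum_congr rfl fun B hB =>
          card_sdiff_symmDiff_sub_card_symmDiff (hsub A hA) (hsub B hB)
    _ = ∑ x ∈ S, (∑ A ∈ 𝓕, signIndicator A x) * ∑ B ∈ 𝓕, signIndicator B x := by
        simp_rw [sum_mul_sum]
        exact (sum_congr rfl fun A _ => sum_comm).trans sum_comm
    _ = _ := by simp_rw [sum_signIndicator, sq]

end Finset

theorem stmt_2_general {α : Type*} [DecidableEq α] (S : Finset α)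
    (𝓕 : Finset (Finset α)) (hsub : ∀ A ∈ 𝓕, A ⊆ S) :
    (∑ A ∈ 𝓕, ∑ B ∈ 𝓕, (S \ ((A \ B) ∪ (B \ A))).card) =
      (∑ A ∈ 𝓕, ∑ B ∈ 𝓕, ((A \ B) ∪ (B \ A)).card) ↔
    ∀ x ∈ S, 2 * (𝓕.filter (fun A => x ∈ A)).card = 𝓕.card := by
  have key := sum_sum_card_sdiff_symmDiff_sub_card_symmDiff hsub
  simp only [symmDiff_def, sup_eq_union, sum_sub_distrib] at key
  rw [← Nat.cast_inj (R := ℤ), ← sub_eq_zero]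
  push_cast
  rw [key, sum_eq_zero_iff_of_nonneg fun x _ => sq_nonneg _]
  simp only [sq_eq_zero_iff, sub_eq_zero]
  exact forall₂_congr fun x _ => by norm_cast

theorem stmt_2 {α : Type*} [DecidableEq α] (S : Finset α) (hS : S.Nonempty)
    (𝓕 : Finset (Finset α)) (h𝓕 : 𝓕.Nonempty) (hsub : ∀ A ∈ 𝓕, A ⊆ S) :
    (∑ A ∈ 𝓕, ∑ B ∈ 𝓕, (S \ ((A \ B) ∪ (B \ A))).card) =
      (∑ A ∈ 𝓕, ∑ B ∈ 𝓕, ((A \ B) ∪ (B \ A)).card) ↔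
    ∀ x ∈ S, 2 * (𝓕.filter (fun A => x ∈ A)).card = 𝓕.card :=
  stmt_2_general S 𝓕 hsub
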